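/- arXiv:1705.06753 — 3 statements merged into one kernel-verified Lean document; each statement's English description precedes it below -/
import Mathlib

section
/- Fix a parameter m ≥ 1 and an admissible pairwise-overlapping assignment matrix H such that every cluster is nonempty (for each i there exists j with h_{ij} = 1). Define, for each i, α_i* = (Σ_{j=1}^N x_j · h_{ij}/(Σ_{t=1}^k h_{tj})^m) / (Σ_{j=1}^N h_{ij}/(Σ_{t=1}^k h_{tj})^m). Then A* = (α_1*,…,α_k*) minimizes the objective for this H: J(H; A*) ≤ J(H; A) for every A = (α_1,…,α_k) ∈ (ℝⁿ)^k. -/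
/-!
Writing `w i j = h i j / (∑ t, h t j) ^ m`, the objective is `∑ i, ∑ j, w i j * ‖x j - α i‖ ^ 2`,
so for fixed `H` it splits into one weighted least-squares problem per cluster. The weights are
nonnegative, and by the parallel axis theorem each of these problems is minimized by the weighted
centre of mass of the data, which is formula (2).
-/

open Finset

/-- A pairwise-overlapping assignment matrix: 0/1 entries, each column summing
to 1 or 2. -/
def IsPairwiseAssignment {k N : ℕ} (h : Fin k → Fin N → ℝ) : Prop :=
  (∀ i j, h i j = 0 ∨ h i j = 1) ∧
    (∀ j, 1 ≤ ∑ i, h i j) ∧ (∀ j, (∑ i, h i j) ≤ 2)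

/-- The objective `J(H;A)` of the pairwise overlapping k-means problem. -/
noncomputable def Jobj {n k N : ℕ} (m : ℝ) (x : Fin N → EuclideanSpace ℝ (Fin n))
    (h : Fin k → Fin N → ℝ) (A : Fin k → EuclideanSpace ℝ (Fin n)) : ℝ :=
  ∑ j, (∑ i, ‖x j - A i‖ ^ 2 * h i j) / (∑ i, h i j) ^ m

namespace Finset

variable {ι E : Type*} [NormedAddCommGroup E] [InnerProductSpace ℝ E]

theorem sum_smul_sub_centerMass {s : Finset ι} {w : ι → ℝ} (hw : ∑ i ∈ s, w i ≠ 0) (x : ι → E) :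
    ∑ i ∈ s, w i • (x i - s.centerMass w x) = 0 := by
  rw [sum_congr rfl fun i _ => smul_sub (w i) (x i) _, sum_sub_distrib, ← sum_smul, centerMass,
    smul_inv_smul₀ hw, sub_self]

theorem sum_mul_norm_sub_sq_eq_add_centerMass {s : Finset ι} {w : ι → ℝ} (hw : ∑ i ∈ s, w i ≠ 0)
    (x : ι → E) (a : E) :
    ∑ i ∈ s, w i * ‖x i - a‖ ^ 2 =
      ∑ i ∈ s, w i * ‖x i - s.centerMass w x‖ ^ 2 +
        (∑ i ∈ s, w i) * ‖s.centerMass w x - a‖ ^ 2 := by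
  set c := s.centerMass w x
  have hcross : ∑ i ∈ s, w i * inner ℝ (x i - c) (c - a) = 0 := by
    simpa only [sum_inner, real_inner_smul_left, inner_zero_left] using
      congrArg (inner ℝ · (c - a)) (sum_smul_sub_centerMass hw x)
  have hsplit : ∀ i, w i * ‖x i - a‖ ^ 2 =
      w i * ‖x i - c‖ ^ 2 + 2 * (w i * inner ℝ (x i - c) (c - a)) + w i * ‖c - a‖ ^ 2 := by
    intro i
    rw [← sub_add_sub_cancel (x i) c a, norm_add_sq_real]
    ring
  rw [sum_congr rfl fun i _ => hsplit i, sum_add_distrib, sum_add_distrib, ← mul_sum, hcross,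
    sum_mul]
  ring

theorem sum_mul_norm_sub_centerMass_sq_le {s : Finset ι} {w : ι → ℝ} (hw : ∀ i ∈ s, 0 ≤ w i)
    (x : ι → E) (a : E) :
    ∑ i ∈ s, w i * ‖x i - s.centerMass w x‖ ^ 2 ≤ ∑ i ∈ s, w i * ‖x i - a‖ ^ 2 := by
  by_cases hW : ∑ i ∈ s, w i = 0
  · have hzero : ∀ y : E, ∑ i ∈ s, w i * ‖x i - y‖ ^ 2 = 0 := fun y =>
      sum_eq_zero fun i hi => by rw [(sum_eq_zero_iff_of_nonneg hw).1 hW i hi, zero_mul]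
    rw [hzero, hzero]
  · rw [sum_mul_norm_sub_sq_eq_add_centerMass hW x a, le_add_iff_nonneg_right]
    exact mul_nonneg (sum_nonneg hw) (sq_nonneg _)

end Finset

noncomputable def clusterWeight {k N : ℕ} (m : ℝ) (h : Fin k → Fin N → ℝ) (i : Fin k) (j : Fin N) :
    ℝ :=
  h i j / (∑ t, h t j) ^ m

theorem Jobj_eq_sum_clusterWeight {n k N : ℕ} (m : ℝ) (x : Fin N → EuclideanSpace ℝ (Fin n))
    (h : Fin k → Fin N → ℝ) (A : Fin k → EuclideanSpace ℝ (Fin n)) :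
    Jobj m x h A = ∑ i, ∑ j, clusterWeight m h i j * ‖x j - A i‖ ^ 2 := by
  simp only [Jobj, clusterWeight, sum_div]
  rw [sum_comm]
  exact sum_congr rfl fun i _ => sum_congr rfl fun j _ => by ring

theorem clusterWeight_nonneg {k N : ℕ} (m : ℝ) {h : Fin k → Fin N → ℝ} (hh : ∀ i j, 0 ≤ h i j)
    (i : Fin k) (j : Fin N) : 0 ≤ clusterWeight m h i j :=
  div_nonneg (hh i j) (Real.rpow_nonneg (sum_nonneg fun t _ => hh t j) m)

theorem IsPairwiseAssignment.nonneg {k N : ℕ} {h : Fin k → Fin N → ℝ}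
    (hH : IsPairwiseAssignment h) (i : Fin k) (j : Fin N) : 0 ≤ h i j := by
  rcases hH.1 i j with h0 | h1 <;> simp [*]

theorem update_step_optimal_general (n k N : ℕ) (m : ℝ)
    (x : Fin N → EuclideanSpace ℝ (Fin n)) (h : Fin k → Fin N → ℝ)
    (hH : IsPairwiseAssignment h)
    (Astar : Fin k → EuclideanSpace ℝ (Fin n))
    (hAstar : ∀ i, Astar i =
      (∑ j, (h i j / (∑ t, h t j) ^ m))⁻¹ •
        ∑ j, (h i j / (∑ t, h t j) ^ m) • x j) :
    ∀ A : Fin k → EuclideanSpace ℝ (Fin n), Jobj m x h Astar ≤ Jobj m x h A := by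
  intro A
  have hcentroid : ∀ i, Astar i = univ.centerMass (clusterWeight m h i) x := hAstar
  rw [Jobj_eq_sum_clusterWeight, Jobj_eq_sum_clusterWeight]
  refine sum_le_sum fun i _ => ?_
  rw [hcentroid]
  exact sum_mul_norm_sub_centerMass_sq_le (fun j _ => clusterWeight_nonneg m hH.nonneg i j) x (A i)

/-- **Part 2 of Theorem 1 (centroid formula).** For a fixed admissible
pairwise-overlapping assignment matrix with all clusters nonempty, the weighted
centroids `α* i` given by formula (2) minimize `J(H; ·)`. -/
theorem update_step_optimal (n k N : ℕ) (m : ℝ) (hm : 1 ≤ m)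
    (x : Fin N → EuclideanSpace ℝ (Fin n)) (h : Fin k → Fin N → ℝ)
    (hH : IsPairwiseAssignment h) (hne : ∀ i, ∃ j, h i j = 1)
    (Astar : Fin k → EuclideanSpace ℝ (Fin n))
    (hAstar : ∀ i, Astar i =
      (∑ j, (h i j / (∑ t, h t j) ^ m))⁻¹ •
        ∑ j, (h i j / (∑ t, h t j) ^ m) • x j) :
    ∀ A : Fin k → EuclideanSpace ℝ (Fin n), Jobj m x h Astar ≤ Jobj m x h A :=
  update_step_optimal_general n k N m x h hH Astar hAstar
end

section
/- Fix m ≥ 1, a point x ∈ ℝⁿ, and means α_1,…,α_k ∈ ℝⁿ with k ≥ 2. Let i₁ ≠ i₂ be indices such that ‖x − α_{i₁}‖² ≤ ‖x − α_i‖² for all i ≠ i₁ and ‖x − α_{i₂}‖² ≤ ‖x − α_i‖² for all i ∉ {i₁, i₂}. Then for every subset S ⊆ {1,…,k} with 1 ≤ |S| ≤ 2, min( ‖x − α_{i₁}‖², (‖x − α_{i₁}‖² + ‖x − α_{i₂}‖²)/2^m ) ≤ cost(S). In particular, if ‖x − α_{i₁}‖² < (‖x − α_{i₁}‖² + ‖x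 − α_{i₂}‖²)/2^m then the singleton {i₁} minimizes cost over all admissible subsets, and otherwise the pair {i₁, i₂} minimizes cost over all admissible subsets. -/
open Finset

/-- Per-element assignment cost of a subset `S` of clusters:
`cost S = (∑_{i ∈ S} ‖x − α i‖²) / |S|^m`. -/
noncomputable def elemCost {n k : ℕ} (m : ℝ) (x : EuclideanSpace ℝ (Fin n))
    (α : Fin k → EuclideanSpace ℝ (Fin n)) (S : Finset (Fin k)) : ℝ :=
  (∑ i ∈ S, ‖x - α i‖ ^ 2) / (S.card : ℝ) ^ m

/-- **Part 1 of Theorem 1 (optimal assignment rule).** If `α i₁` and `α i₂`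
are the two nearest means to `x`, then for any admissible subset `S`
(`1 ≤ |S| ≤ 2`) the cost is at least
`min(‖x − α i₁‖², (‖x − α i₁‖² + ‖x − α i₂‖²)/2^m)`; moreover the singleton
`{i₁}` is optimal when `‖x − α i₁‖² < (‖x − α i₁‖² + ‖x − α i₂‖²)/2^m`, and
the pair `{i₁, i₂}` is optimal otherwise. -/
theorem assignment_step_optimal (n k : ℕ) (hk : 2 ≤ k) (m : ℝ) (hm : 1 ≤ m)
    (x : EuclideanSpace ℝ (Fin n)) (α : Fin k → EuclideanSpace ℝ (Fin n))
    (i₁ i₂ : Fin k) (h12 : i₁ ≠ i₂)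
    (h1 : ∀ i, i ≠ i₁ → ‖x - α i₁‖ ^ 2 ≤ ‖x - α i‖ ^ 2)
    (h2 : ∀ i, i ≠ i₁ → i ≠ i₂ → ‖x - α i₂‖ ^ 2 ≤ ‖x - α i‖ ^ 2) :
    (∀ S : Finset (Fin k), 1 ≤ S.card → S.card ≤ 2 →
      min (‖x - α i₁‖ ^ 2) ((‖x - α i₁‖ ^ 2 + ‖x - α i₂‖ ^ 2) / (2 : ℝ) ^ m)
        ≤ elemCost m x α S)
    ∧ (‖x - α i₁‖ ^ 2 < (‖x - α i₁‖ ^ 2 + ‖x - α i₂‖ ^ 2) / (2 : ℝ) ^ m →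
        ∀ S : Finset (Fin k), 1 ≤ S.card → S.card ≤ 2 →
          elemCost m x α {i₁} ≤ elemCost m x α S)
    ∧ ((‖x - α i₁‖ ^ 2 + ‖x - α i₂‖ ^ 2) / (2 : ℝ) ^ m ≤ ‖x - α i₁‖ ^ 2 →
        ∀ S : Finset (Fin k), 1 ≤ S.card → S.card ≤ 2 →
          elemCost m x α {i₁, i₂} ≤ elemCost m x α S) := by
  have h1' : ∀ i, ‖x - α i₁‖ ^ 2 ≤ ‖x - α i‖ ^ 2 := by
    intro i
    by_cases h : i = i₁
    · subst h; exact le_refl _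
    · exact h1 i h
  have h2pos : (0:ℝ) < (2 : ℝ) ^ m := by positivity
  have key : ∀ S : Finset (Fin k), 1 ≤ S.card → S.card ≤ 2 →
      min (‖x - α i₁‖ ^ 2) ((‖x - α i₁‖ ^ 2 + ‖x - α i₂‖ ^ 2) / (2 : ℝ) ^ m)
        ≤ elemCost m x α S := by
    intro S hS1 hS2
    obtain h | h : S.card = 1 ∨ S.card = 2 := by omega
    · obtain ⟨a, rfl⟩ := Finset.card_eq_one.mp h
      have hc : elemCost m x α {a} = ‖x - α a‖ ^ 2 := by
        simp [elemCost, Real.one_rpow]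
      rw [hc]
      exact le_trans (min_le_left _ _) (h1' a)
    · obtain ⟨a, b, hab, rfl⟩ := Finset.card_eq_two.mp h
      have hsum : ‖x - α i₁‖ ^ 2 + ‖x - α i₂‖ ^ 2 ≤ ‖x - α a‖ ^ 2 + ‖x - α b‖ ^ 2 := by
        by_cases ha1 : a = i₁
        · subst ha1
          by_cases hb2 : b = i₂
          · subst hb2; exact le_refl _
          · exact add_le_add le_rfl (h2 b (Ne.symm hab) hb2)
        · by_cases hb1 : b = i₁
          · subst hb1
            by_cases ha2 : a = i₂
            · subst ha2; rw [add_comm]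
            · rw [add_comm]
              exact add_le_add (h2 a ha1 ha2) le_rfl
          · by_cases ha2 : a = i₂
            · subst ha2
              rw [add_comm]
              exact add_le_add le_rfl (h1' b)
            · refine add_le_add (h1' a) ?_
              by_cases hb2 : b = i₂
              · subst hb2; exact le_rfl
              · exact h2 b hb1 hb2
      have hc : elemCost m x α {a, b} = (‖x - α a‖ ^ 2 + ‖x - α b‖ ^ 2) / (2 : ℝ) ^ m := by
        rw [elemCost, h, Finset.sum_pair hab]; norm_num
      rw [hc]
      refine le_trans (min_le_right _ _) ?_
      gcongr
  have hc1 : elemCost m x α {i₁} = ‖x - α i₁‖ ^ 2 := by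
    simp [elemCost, Real.one_rpow]
  have hc12 : elemCost m x α {i₁, i₂}
      = (‖x - α i₁‖ ^ 2 + ‖x - α i₂‖ ^ 2) / (2 : ℝ) ^ m := by
    rw [elemCost, Finset.card_pair h12, Finset.sum_pair h12]; norm_num
  refine ⟨key, ?_, ?_⟩
  · intro hlt S hS1 hS2
    rw [hc1]
    have := key S hS1 hS2
    rwa [min_eq_left hlt.le] at this
  · intro hle S hS1 hS2
    rw [hc12]
    have := key S hS1 hS2
    rwa [min_eq_right hle] at this
end

section
/- Fix m ≥ 1 and real numbers α₁ < α₂, and write L = α₂ − α₁. Let I₁ = {x ∈ [α₁, α₂] : g₁(x) ≤ g₁₂(x)} and I₂ = {x ∈ [α₁, α₂] : g₂(x) ≤ g₁₂(x)}. Then I₁ is the closed interval [α₁, α₁ + L/(1 + √(2^m − 1))], I₂ is the closed interval [α₂ − L/(1 + √(2^m − 1)), α₂], and the Lebesgue measures of I₁ and I₂ are both equal to L/(1 + √(2^m − 1)). -/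
open MeasureTheory

/-- **Lengths of the single-cluster intervals (Section 3.3).** For `m ≥ 1` and
`α₁ < α₂` with `L = α₂ − α₁`, the sets
`I₁ = {x ∈ [α₁, α₂] : g₁ x ≤ g₁₂ x}` and `I₂ = {x ∈ [α₁, α₂] : g₂ x ≤ g₁₂ x}`
(with `g₁ x = (x−α₁)²`, `g₂ x = (x−α₂)²`,
`g₁₂ x = 2^{−m}((x−α₁)² + (x−α₂)²)`) are the closed intervals
`[α₁, α₁ + L/(1+√(2^m−1))]` and `[α₂ − L/(1+√(2^m−1)), α₂]`, and both have
Lebesgue measure `L/(1+√(2^m−1))`. -/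
theorem single_cluster_intervals (m : ℝ) (hm : 1 ≤ m) (α₁ α₂ : ℝ) (hα : α₁ < α₂) :
    {x ∈ Set.Icc α₁ α₂ |
        (x - α₁) ^ 2 ≤ (2 : ℝ) ^ (-m) * ((x - α₁) ^ 2 + (x - α₂) ^ 2)}
      = Set.Icc α₁ (α₁ + (α₂ - α₁) / (1 + Real.sqrt ((2 : ℝ) ^ m - 1))) ∧
    {x ∈ Set.Icc α₁ α₂ |
        (x - α₂) ^ 2 ≤ (2 : ℝ) ^ (-m) * ((x - α₁) ^ 2 + (x - α₂) ^ 2)}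
      = Set.Icc (α₂ - (α₂ - α₁) / (1 + Real.sqrt ((2 : ℝ) ^ m - 1))) α₂ ∧
    volume {x ∈ Set.Icc α₁ α₂ |
        (x - α₁) ^ 2 ≤ (2 : ℝ) ^ (-m) * ((x - α₁) ^ 2 + (x - α₂) ^ 2)}
      = ENNReal.ofReal ((α₂ - α₁) / (1 + Real.sqrt ((2 : ℝ) ^ m - 1))) ∧
    volume {x ∈ Set.Icc α₁ α₂ |
        (x - α₂) ^ 2 ≤ (2 : ℝ) ^ (-m) * ((x - α₁) ^ 2 + (x - α₂) ^ 2)}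
      = ENNReal.ofReal ((α₂ - α₁) / (1 + Real.sqrt ((2 : ℝ) ^ m - 1))) := by
  set s := Real.sqrt ((2 : ℝ) ^ m - 1) with hs_def
  set u := (2 : ℝ) ^ m with hu_def
  have ht2 : (2 : ℝ) ≤ u := by
    calc (2 : ℝ) = (2 : ℝ) ^ (1 : ℝ) := (Real.rpow_one 2).symm
    _ ≤ u := Real.rpow_le_rpow_of_exponent_le (by norm_num) hm
  have hupos : (0 : ℝ) < u := by linarith
  have hs1 : (1 : ℝ) ≤ s := by
    have h := Real.sqrt_le_sqrt (show (1 : ℝ) ≤ u - 1 by linarith)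
    rwa [Real.sqrt_one] at h
  have hssq : s ^ 2 = u - 1 := Real.sq_sqrt (by linarith)
  have hneg : (2 : ℝ) ^ (-m) = u⁻¹ := Real.rpow_neg (by norm_num) m
  have h1s : (0 : ℝ) < 1 + s := by linarith
  have hdnn : 0 ≤ (α₂ - α₁) / (1 + s) := div_nonneg (by linarith) h1s.le
  have hB : α₁ + (α₂ - α₁) / (1 + s) ≤ α₂ := by
    have : (α₂ - α₁) / (1 + s) ≤ α₂ - α₁ := div_le_self (by linarith) (by linarith)
    linarith
  have hB2 : α₁ ≤ α₂ - (α₂ - α₁) / (1 + s) := by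
    have : (α₂ - α₁) / (1 + s) ≤ α₂ - α₁ := div_le_self (by linarith) (by linarith)
    linarith
  have key1 : ∀ x, x ∈ Set.Icc α₁ α₂ →
      ((x - α₁) ^ 2 ≤ (2 : ℝ) ^ (-m) * ((x - α₁) ^ 2 + (x - α₂) ^ 2) ↔
        s * (x - α₁) ≤ α₂ - x) := by
    intro x hx
    have ha : 0 ≤ s * (x - α₁) := mul_nonneg (by linarith) (by linarith [hx.1])
    have hb : 0 ≤ α₂ - x := by linarith [hx.2]
    rw [hneg, inv_mul_eq_div, le_div_iff₀ hupos]
    constructor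
    · intro h; nlinarith [h, ha, hb, hssq]
    · intro h; nlinarith [mul_le_mul h h ha hb, hssq]
  have key2 : ∀ x, x ∈ Set.Icc α₁ α₂ →
      ((x - α₂) ^ 2 ≤ (2 : ℝ) ^ (-m) * ((x - α₁) ^ 2 + (x - α₂) ^ 2) ↔
        s * (α₂ - x) ≤ x - α₁) := by
    intro x hx
    have ha : 0 ≤ s * (α₂ - x) := mul_nonneg (by linarith) (by linarith [hx.2])
    have hb : 0 ≤ x - α₁ := by linarith [hx.1]
    rw [hneg, inv_mul_eq_div, le_div_iff₀ hupos]
    constructor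
    · intro h; nlinarith [h, ha, hb, hssq]
    · intro h; nlinarith [mul_le_mul h h ha hb, hssq]
  have e1 : {x ∈ Set.Icc α₁ α₂ |
        (x - α₁) ^ 2 ≤ (2 : ℝ) ^ (-m) * ((x - α₁) ^ 2 + (x - α₂) ^ 2)}
      = Set.Icc α₁ (α₁ + (α₂ - α₁) / (1 + s)) := by
    ext x
    simp only [Set.mem_setOf_eq, Set.mem_Icc]
    constructor
    · rintro ⟨⟨h1, h2⟩, hP⟩
      refine ⟨h1, ?_⟩
      have hk := (key1 x ⟨h1, h2⟩).mp hP
      have h3 : (x - α₁) * (1 + s) ≤ α₂ - α₁ := by nlinarith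
      have := (le_div_iff₀ h1s).mpr h3
      linarith
    · rintro ⟨h1, h2⟩
      have hx2 : x ≤ α₂ := le_trans h2 hB
      refine ⟨⟨h1, hx2⟩, (key1 x ⟨h1, hx2⟩).mpr ?_⟩
      have h3 : x - α₁ ≤ (α₂ - α₁) / (1 + s) := by linarith
      have := (le_div_iff₀ h1s).mp h3
      nlinarith
  have e2 : {x ∈ Set.Icc α₁ α₂ |
        (x - α₂) ^ 2 ≤ (2 : ℝ) ^ (-m) * ((x - α₁) ^ 2 + (x - α₂) ^ 2)}
      = Set.Icc (α₂ - (α₂ - α₁) / (1 + s)) α₂ := by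
    ext x
    simp only [Set.mem_setOf_eq, Set.mem_Icc]
    constructor
    · rintro ⟨⟨h1, h2⟩, hP⟩
      refine ⟨?_, h2⟩
      have hk := (key2 x ⟨h1, h2⟩).mp hP
      have h3 : (α₂ - x) * (1 + s) ≤ α₂ - α₁ := by nlinarith
      have := (le_div_iff₀ h1s).mpr h3
      linarith
    · rintro ⟨h1, h2⟩
      have hx1 : α₁ ≤ x := le_trans hB2 h1
      refine ⟨⟨hx1, h2⟩, (key2 x ⟨hx1, h2⟩).mpr ?_⟩
      have h3 : α₂ - x ≤ (α₂ - α₁) / (1 + s) := by linarith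
      have := (le_div_iff₀ h1s).mp h3
      nlinarith
  refine ⟨e1, e2, ?_, ?_⟩
  · rw [e1, Real.volume_Icc]; congr 1; ring
  · rw [e2, Real.volume_Icc]; congr 1; ring
end
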